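/- arXiv:2405.06519 — 2 statements merged into one kernel-verified Lean document; each statement's English description precedes it below -/
import Mathlib

section
/- The map μ ↦ c_μ, where c_μ(K,v) = μ(Y(K,v)), is a vector space isomorphism from the space of real-valued charges (finitely additive set functions vanishing on ∅) on the ring R generated by the sets Y(K,v) onto the space J* of consistent maps from J to ℝ. -/
/-- Abstract axiomatization of the space `Y` of all places of `\overline{ℚ}`: a directed
system `F` of number fields (ordered by field extension `le`), the places `Pl K` of each
number field, the map `over` sending a place `w` of `L` to the place of `K` it divides, and
the basic compact open sets `Y(K,v) = {y ∈ Y : y ∣ v}` forming a basis of the totally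
disconnected Hausdorff topology on `Y`. -/
structure PlaceSystem where
  /-- the number fields -/
  F : Type
  /-- `le K L` means `L/K` is a (finite) field extension -/
  le : F → F → Prop
  le_refl : ∀ K, le K K
  /-- any two number fields admit a compositum -/
  directed : ∀ K L, ∃ M, le K M ∧ le L M
  /-- the places of a number field -/
  Pl : F → Type
  /-- `over h w` is the unique place of `K` divided by the place `w` of `L` -/
  over' : ∀ {K L : F}, le K L → Pl L → Pl K
  /-- only finitely many places of `L` divide a given place of `K` -/
  finiteFibers : ∀ {K L : F} (h : le K L) (v : Pl K), {w : Pl L | over' h w = v}.Finite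
  /-- the set of places of `\overline{ℚ}` -/
  Y : Type
  top : TopologicalSpace Y
  t2 : @T2Space Y top
  /-- the basic set `Y(K,v)` of places of `\overline{ℚ}` dividing `v` -/
  Yset : (K : F) → Pl K → Set Y
  Yset_nonempty : ∀ (K : F) (v : Pl K), (Yset K v).Nonempty
  Yset_compact : ∀ (K : F) (v : Pl K), @IsCompact Y top (Yset K v)
  Yset_open : ∀ (K : F) (v : Pl K), @IsOpen Y top (Yset K v)
  Yset_disjoint : ∀ (K : F) (v w : Pl K), v ≠ w → Disjoint (Yset K v) (Yset K w)
  /-- `Y(K,v)` is the disjoint union of the `Y(L,w)` over the places `w ∣ v` of `L` -/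
  Yset_decomp : ∀ {K L : F} (h : le K L) (v : Pl K),
    Yset K v = ⋃ w ∈ {w : Pl L | over' h w = v}, Yset L w
  basis : @TopologicalSpace.IsTopologicalBasis Y top
    {A : Set Y | ∃ (K : F) (v : Pl K), A = Yset K v}
  cover : (⋃ (K : F) (v : Pl K), Yset K v) = Set.univ
  noncompact : ¬ @IsCompact Y top Set.univ

/-- A map `c` on pairs `(K,v)` is consistent if `c(K,v) = Σ_{w ∣ v} c(L,w)` for every finite
extension `L/K`. -/
def PlaceSystem.Consistent (S : PlaceSystem) (c : ∀ K : S.F, S.Pl K → ℝ) : Prop :=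
  ∀ {K L : S.F} (h : S.le K L) (v : S.Pl K),
    c K v = ∑ᶠ (w : S.Pl L) (_ : S.over' h w = v), c L w

/-- `R`, the smallest ring of sets on `Y` containing all the basic sets `Y(K,v)`. -/
def PlaceSystem.ringR (S : PlaceSystem) : Set (Set S.Y) :=
  ⋂₀ {R : Set (Set S.Y) |
    MeasureTheory.IsSetRing R ∧ ∀ (K : S.F) (v : S.Pl K), S.Yset K v ∈ R}

/-- A charge on `R`: a finitely additive real-valued set function vanishing on `∅`. -/
def PlaceSystem.IsCharge (S : PlaceSystem) (μ : Set S.Y → ℝ) : Prop :=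
  μ ∅ = 0 ∧ ∀ A ∈ S.ringR, ∀ B ∈ S.ringR, Disjoint A B → μ (A ∪ B) = μ A + μ B

/-! An element of `R` is a finite union of basic sets `Y(K,v)` of a single level `K`, since any
two levels have a common refinement `M` and `Y(K,v) = ⋃_{w ∣ v} Y(M,w)`. At a fixed level this
description is unique, the `Y(K,v)` being nonempty and pairwise disjoint. Hence a charge is
determined by its values on the `Y(K,v)`, and these are consistent by additivity. Conversely a
consistent map `c` defines the charge `⋃_{v ∈ s} Y(K,v) ↦ ∑_{v ∈ s} c(K,v)`, which is well
defined because consistency makes the sum invariant under refinement. -/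

namespace MeasureTheory

theorem isSetRing_sInter {α : Type*} {𝒞 : Set (Set (Set α))} (h𝒞 : ∀ C ∈ 𝒞, IsSetRing C) :
    IsSetRing (⋂₀ 𝒞) where
  empty_mem C hC := (h𝒞 C hC).empty_mem
  union_mem _ _ hs ht C hC := (h𝒞 C hC).union_mem (hs C hC) (ht C hC)
  sdiff_mem _ _ hs ht C hC := (h𝒞 C hC).sdiff_mem (hs C hC) (ht C hC)

end MeasureTheory

open MeasureTheory Function

namespace PlaceSystem

open scoped Classical

variable (S : PlaceSystem)

theorem nonempty_F : Nonempty S.F := by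
  let := S.top
  obtain ⟨y⟩ : Nonempty S.Y := by
    by_contra hY
    have : IsEmpty S.Y := not_nonempty_iff.mp hY
    exact S.noncompact Set.finite_univ.isCompact
  obtain ⟨K, -, -⟩ := Set.mem_iUnion₂.mp (S.cover.symm ▸ Set.mem_univ y)
  exact ⟨K⟩

theorem pairwise_disjoint_Yset (K : S.F) : Pairwise (Disjoint on (S.Yset K)) :=
  fun v w hvw => S.Yset_disjoint K v w hvw

theorem biUnion_Yset_injective (K : S.F) :
    Injective fun s : Finset (S.Pl K) => ⋃ v ∈ s, S.Yset K v :=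
  fun _ _ h => Finset.coe_injective <|
    (S.pairwise_disjoint_Yset K).biUnion_injective (S.Yset_nonempty K) h

noncomputable def fiber {K L : S.F} (h : S.le K L) (v : S.Pl K) : Finset (S.Pl L) :=
  (S.finiteFibers h v).toFinset

variable {S}

@[simp]
theorem mem_fiber {K L : S.F} {h : S.le K L} {v : S.Pl K} {w : S.Pl L} :
    w ∈ S.fiber h v ↔ S.over' h w = v :=
  Set.Finite.mem_toFinset _

theorem pairwise_disjoint_fiber {K L : S.F} (h : S.le K L) : Pairwise (Disjoint on (S.fiber h)) :=
  fun _ _ hvv' => Finset.disjoint_left.mpr fun _ hv hv' =>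
    hvv' (mem_fiber.mp hv ▸ mem_fiber.mp hv')

theorem Yset_eq_biUnion_fiber {K L : S.F} (h : S.le K L) (v : S.Pl K) :
    S.Yset K v = ⋃ w ∈ S.fiber h v, S.Yset L w := by
  simp only [S.Yset_decomp h v, mem_fiber, Set.mem_ofPred_eq]

theorem biUnion_Yset_eq_biUnion_fiber {K L : S.F} (h : S.le K L) (s : Finset (S.Pl K)) :
    ⋃ v ∈ s, S.Yset K v = ⋃ w ∈ s.biUnion (S.fiber h), S.Yset L w := by
  rw [Finset.set_biUnion_biUnion]
  exact Set.iUnion₂_congr fun v _ => Yset_eq_biUnion_fiber h v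

theorem sum_fiber_eq_finsum {K L : S.F} (h : S.le K L) (v : S.Pl K) (f : S.Pl L → ℝ) :
    ∑ w ∈ S.fiber h v, f w = ∑ᶠ (w : S.Pl L) (_ : S.over' h w = v), f w :=
  (finsum_mem_eq_finite_toFinset_sum f (S.finiteFibers h v)).symm

theorem exists_common_level {K L : S.F} (s : Finset (S.Pl K)) (t : Finset (S.Pl L)) :
    ∃ (M : S.F) (s' t' : Finset (S.Pl M)), ⋃ v ∈ s, S.Yset K v = ⋃ w ∈ s', S.Yset M w ∧
      ⋃ v ∈ t, S.Yset L v = ⋃ w ∈ t', S.Yset M w := by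
  obtain ⟨M, hKM, hLM⟩ := S.directed K L
  exact ⟨M, _, _, biUnion_Yset_eq_biUnion_fiber hKM s, biUnion_Yset_eq_biUnion_fiber hLM t⟩

variable (S)

def basicUnions : Set (Set S.Y) :=
  {A | ∃ (K : S.F) (s : Finset (S.Pl K)), A = ⋃ v ∈ s, S.Yset K v}

theorem isSetRing_basicUnions : IsSetRing S.basicUnions where
  empty_mem := by
    obtain ⟨K⟩ := S.nonempty_F
    exact ⟨K, ∅, by simp⟩
  union_mem := by
    rintro _ _ ⟨K, s, rfl⟩ ⟨L, t, rfl⟩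
    obtain ⟨M, s', t', hs, ht⟩ := exists_common_level s t
    exact ⟨M, s' ∪ t', by rw [hs, ht, Finset.set_biUnion_union]⟩
  sdiff_mem := by
    rintro _ _ ⟨K, s, rfl⟩ ⟨L, t, rfl⟩
    obtain ⟨M, s', t', hs, ht⟩ := exists_common_level s t
    refine ⟨M, s' \ t', ?_⟩
    rw [hs, ht, ← Finset.set_biUnion_coe, ← Finset.set_biUnion_coe t', ← Finset.set_biUnion_coe,
      Finset.coe_sdiff]
    exact Set.biUnion_sdiff_biUnion_eq ((S.pairwise_disjoint_Yset M).set_pairwise _)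

theorem ringR_eq_basicUnions : S.ringR = S.basicUnions := by
  refine le_antisymm
    (Set.sInter_subset_of_mem ⟨S.isSetRing_basicUnions, fun K v => ⟨K, {v}, by simp⟩⟩) ?_
  rintro _ ⟨K, s, rfl⟩ R ⟨hR, hYset⟩
  exact hR.biUnion_mem s fun v _ => hYset K v

theorem Yset_mem_ringR (K : S.F) (v : S.Pl K) : S.Yset K v ∈ S.ringR :=
  fun _ hR => hR.2 K v

theorem isSetRing_ringR : IsSetRing S.ringR :=
  isSetRing_sInter fun _ hR => hR.1

variable {S}

theorem IsCharge.map_biUnion_Yset {μ : Set S.Y → ℝ} (hμ : S.IsCharge μ) (K : S.F)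
    (s : Finset (S.Pl K)) : μ (⋃ v ∈ s, S.Yset K v) = ∑ v ∈ s, μ (S.Yset K v) :=
  addContent_biUnion (m := S.isSetRing_ringR.addContent_of_union μ hμ.1 (hμ.2 _ · _ ·))
    (fun v _ => S.Yset_mem_ringR K v) ((S.pairwise_disjoint_Yset K).set_pairwise _)
    (S.isSetRing_ringR.biUnion_mem s fun v _ => S.Yset_mem_ringR K v)

theorem IsCharge.consistent {μ : Set S.Y → ℝ} (hμ : S.IsCharge μ) :
    S.Consistent fun K v => μ (S.Yset K v) := fun {_ L} h v => by
  dsimp only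
  rw [Yset_eq_biUnion_fiber h v, hμ.map_biUnion_Yset L, sum_fiber_eq_finsum]

theorem IsCharge.eq_of_forall_Yset_eq {μ ν : Set S.Y → ℝ} (hμ : S.IsCharge μ) (hν : S.IsCharge ν)
    (hμ₀ : ∀ A ∉ S.ringR, μ A = 0) (hν₀ : ∀ A ∉ S.ringR, ν A = 0)
    (hμν : ∀ K v, μ (S.Yset K v) = ν (S.Yset K v)) : μ = ν := by
  ext A
  by_cases hA : A ∈ S.ringR
  · obtain ⟨K, s, rfl⟩ := S.ringR_eq_basicUnions ▸ hA
    rw [hμ.map_biUnion_Yset, hν.map_biUnion_Yset]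
    exact Finset.sum_congr rfl fun v _ => hμν K v
  · rw [hμ₀ A hA, hν₀ A hA]

variable {c : ∀ K : S.F, S.Pl K → ℝ}

theorem Consistent.sum_eq_sum_biUnion_fiber (hc : S.Consistent c) {K L : S.F} (h : S.le K L)
    (s : Finset (S.Pl K)) : ∑ v ∈ s, c K v = ∑ w ∈ s.biUnion (S.fiber h), c L w := by
  rw [Finset.sum_biUnion ((pairwise_disjoint_fiber h).set_pairwise _)]
  exact Finset.sum_congr rfl fun v _ => (hc h v).trans (sum_fiber_eq_finsum h v _).symm

theorem Consistent.sum_eq_of_biUnion_Yset_eq (hc : S.Consistent c) {K L : S.F}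
    {s : Finset (S.Pl K)} {t : Finset (S.Pl L)}
    (hst : ⋃ v ∈ s, S.Yset K v = ⋃ w ∈ t, S.Yset L w) : ∑ v ∈ s, c K v = ∑ w ∈ t, c L w := by
  obtain ⟨M, hKM, hLM⟩ := S.directed K L
  have hlift : s.biUnion (S.fiber hKM) = t.biUnion (S.fiber hLM) :=
    S.biUnion_Yset_injective M <| by simp only [← biUnion_Yset_eq_biUnion_fiber, hst]
  rw [hc.sum_eq_sum_biUnion_fiber hKM, hc.sum_eq_sum_biUnion_fiber hLM, hlift]

variable (c) in
noncomputable def chargeOf (A : Set S.Y) : ℝ :=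
  if h : A ∈ S.basicUnions then ∑ v ∈ h.choose_spec.choose, c h.choose v else 0

theorem Consistent.chargeOf_biUnion_Yset (hc : S.Consistent c) (K : S.F) (s : Finset (S.Pl K)) :
    chargeOf c (⋃ v ∈ s, S.Yset K v) = ∑ v ∈ s, c K v := by
  have h : ⋃ v ∈ s, S.Yset K v ∈ S.basicUnions := ⟨K, s, rfl⟩
  rw [chargeOf, dif_pos h]
  exact hc.sum_eq_of_biUnion_Yset_eq h.choose_spec.choose_spec.symm

theorem Consistent.chargeOf_Yset (hc : S.Consistent c) (K : S.F) (v : S.Pl K) :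
    chargeOf c (S.Yset K v) = c K v := by
  simpa using hc.chargeOf_biUnion_Yset K {v}

theorem chargeOf_of_notMem_ringR {A : Set S.Y} (hA : A ∉ S.ringR) : chargeOf c A = 0 :=
  dif_neg (S.ringR_eq_basicUnions ▸ hA)

theorem Consistent.isCharge_chargeOf (hc : S.Consistent c) : S.IsCharge (chargeOf c) := by
  refine ⟨?_, fun A hA B hB hAB => ?_⟩
  · obtain ⟨K⟩ := S.nonempty_F
    simpa using hc.chargeOf_biUnion_Yset K ∅
  obtain ⟨K, s, rfl⟩ := S.ringR_eq_basicUnions ▸ hA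
  obtain ⟨L, t, rfl⟩ := S.ringR_eq_basicUnions ▸ hB
  obtain ⟨M, s', t', hs, ht⟩ := exists_common_level s t
  rw [hs, ht] at hAB ⊢
  have hst : Disjoint s' t' := Finset.disjoint_left.mpr fun w hws hwt =>
    let ⟨_, hy⟩ := S.Yset_nonempty M w
    Set.disjoint_left.mp hAB (Set.mem_biUnion hws hy) (Set.mem_biUnion hwt hy)
  rw [← Finset.set_biUnion_union, hc.chargeOf_biUnion_Yset, hc.chargeOf_biUnion_Yset,
    hc.chargeOf_biUnion_Yset, Finset.sum_union hst]

end PlaceSystem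

/-- The map `μ ↦ c_μ`, `c_μ(K,v) = μ(Y(K,v))`, is a vector space isomorphism from the space
of charges on the ring `R` generated by the `Y(K,v)` (normalized to vanish off `R`) onto the
space `J*` of consistent maps: it is bijective and respects addition and scalar
multiplication. -/
theorem stmt_7 (S : PlaceSystem) :
    ∃ φ : {μ : Set S.Y → ℝ // S.IsCharge μ ∧ ∀ A ∉ S.ringR, μ A = 0} →
        {c : ∀ K : S.F, S.Pl K → ℝ // S.Consistent c},
      (∀ μ (K : S.F) (v : S.Pl K), (φ μ).1 K v = μ.1 (S.Yset K v)) ∧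
      Function.Bijective φ ∧
      (∀ μ ν ρ : {μ : Set S.Y → ℝ // S.IsCharge μ ∧ ∀ A ∉ S.ringR, μ A = 0},
        (∀ A, ρ.1 A = μ.1 A + ν.1 A) →
        ∀ (K : S.F) (v : S.Pl K), (φ ρ).1 K v = (φ μ).1 K v + (φ ν).1 K v) ∧
      (∀ (r : ℝ) (μ ρ : {μ : Set S.Y → ℝ // S.IsCharge μ ∧ ∀ A ∉ S.ringR, μ A = 0}),
        (∀ A, ρ.1 A = r * μ.1 A) →
        ∀ (K : S.F) (v : S.Pl K), (φ ρ).1 K v = r * (φ μ).1 K v) := by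
  refine ⟨fun μ => ⟨fun K v => μ.1 (S.Yset K v), μ.2.1.consistent⟩, fun _ _ _ => rfl,
    ⟨?injective, ?surjective⟩, fun _ _ _ h K v => h (S.Yset K v),
    fun _ _ _ h K v => h (S.Yset K v)⟩
  case injective =>
    rintro ⟨μ, hμ, hμ₀⟩ ⟨ν, hν, hν₀⟩ hμν
    exact Subtype.ext <| hμ.eq_of_forall_Yset_eq hν hμ₀ hν₀ fun K v =>
      congr_fun₂ (congrArg Subtype.val hμν) K v
  case surjective =>
    rintro ⟨c, hc⟩
    exact ⟨⟨PlaceSystem.chargeOf c, hc.isCharge_chargeOf,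
      fun _ => PlaceSystem.chargeOf_of_notMem_ringR⟩, Subtype.ext (funext₂ hc.chargeOf_Yset)⟩
end

section
/- Define c(K,v) = (-1)^n [K_v : ℚ_{p_n}]/[K : ℚ] for v dividing the n-th rational place p_n (with p_1, p_2, ... enumerating the primes together with ∞). Then c is a consistent map, but the sum Σ_{n=1}^∞ c(ℚ, p_n) = Σ_{n=1}^∞ (-1)^n does not converge unconditionally in [-∞,∞]; hence c is not globally consistent. -/
open scoped Classical

/-- Unconditional convergence of the finite-part sum: the terms equal to `±∞` are discarded,
and every enumeration of the remaining real terms has partial sums tending to `L`. -/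
noncomputable def UncondRealPart (x : ℕ → EReal) (L : EReal) : Prop :=
  ∀ σ : Equiv.Perm ℕ,
    Filter.Tendsto
      (fun n : ℕ => ((∑ k ∈ Finset.range n,
        if x (σ k) = ⊤ ∨ x (σ k) = ⊥ then (0 : ℝ) else (x (σ k)).toReal : ℝ) : EReal))
      Filter.atTop (nhds L)

/-- Unconditional convergence in `[-∞,∞]` of `Σ_i x i` to `L`, following cases (U1)-(U3). -/
noncomputable def UncondSumE (x : ℕ → EReal) (L : EReal) : Prop :=
  ((∀ i, x i ≠ ⊤) ∧ (∀ i, x i ≠ ⊥) ∧ UncondRealPart x L) ∨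
  ((∃ i, x i = ⊤) ∧ (∀ i, x i ≠ ⊥) ∧ L = ⊤ ∧ ∃ M : EReal, M ≠ ⊥ ∧ UncondRealPart x M) ∨
  ((∃ i, x i = ⊥) ∧ (∀ i, x i ≠ ⊤) ∧ L = ⊥ ∧ ∃ M : EReal, M ≠ ⊤ ∧ UncondRealPart x M)

/-- The basic set attached to an entry of a (padded) basis partition. -/
def partSet (S : PlaceSystem) (o : Option ((K : S.F) × S.Pl K)) : Set S.Y :=
  match o with
  | none => ∅
  | some p => S.Yset p.1 p.2

/-- The value of `c` attached to an entry of a (padded) basis partition. -/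
noncomputable def partVal (S : PlaceSystem) (c : ∀ K : S.F, S.Pl K → ℝ)
    (o : Option ((K : S.F) × S.Pl K)) : EReal :=
  match o with
  | none => 0
  | some p => ((c p.1 p.2 : ℝ) : EReal)

/-- `c` is globally consistent: for every partition of `Y` by pairwise disjoint basic sets
`Y(K,v)` (padded with `∅`), the sum of the values of `c` converges unconditionally in
`[-∞,∞]`. -/
noncomputable def PlaceSystem.GloballyConsistent (S : PlaceSystem)
    (c : ∀ K : S.F, S.Pl K → ℝ) : Prop :=
  ∀ Γ : ℕ → Option ((K : S.F) × S.Pl K),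
    Pairwise (Function.onFun Disjoint fun i => partSet S (Γ i)) →
    (⋃ i, partSet S (Γ i)) = Set.univ →
    ∃ L : EReal, UncondSumE (fun i => partVal S c (Γ i)) L

/-!
The map `c` is `(K,v) ↦ ε(p) · [K_v : ℚ_p] / [K : ℚ]` for a sign `ε(p)` depending only on the
rational place `p` below `v`; consistency is then the degree formula
`Σ_{w ∣ v} [L_w : K_v] = [L : K]` together with the tower law for local degrees. The rational
places themselves form a partition of the space of places by basic sets, on which `c` takes the
values `(-1)^(n+1)`, whose partial sums oscillate between `0` and `-1`.
-/

open Filter Finset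

namespace PlaceSystem

variable (S : PlaceSystem)

lemma Yset_subset_Yset_over' {K L : S.F} (h : S.le K L) (w : S.Pl L) :
    S.Yset L w ⊆ S.Yset K (S.over' h w) := by
  rw [S.Yset_decomp h (S.over' h w)]
  exact Set.subset_biUnion_of_mem (u := S.Yset L) rfl

lemma over'_self {K : S.F} (h : S.le K K) (w : S.Pl K) : S.over' h w = w := by
  by_contra hne
  have hdisj := S.Yset_disjoint K w (S.over' h w) (Ne.symm hne)
  exact (S.Yset_nonempty K w).ne_empty (hdisj.eq_bot_of_le (S.Yset_subset_Yset_over' h w))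

lemma iUnion_Yset_eq_univ {Q : S.F} (bot : ∀ K, S.le Q K) : ⋃ u : S.Pl Q, S.Yset Q u = .univ := by
  refine Set.eq_univ_of_univ_subset (S.cover ▸ Set.iUnion₂_subset fun K v => ?_)
  exact (S.Yset_subset_Yset_over' (bot K) v).trans (Set.subset_iUnion (S.Yset Q) _)

theorem consistent_of_eq_mul_localDegree_div_degree
    (deg : S.F → ℕ) (hdegpos : ∀ K, 0 < deg K)
    (d : ∀ K : S.F, S.Pl K → ℕ) (ld : ∀ {K L : S.F}, S.le K L → S.Pl L → ℕ)
    (htower : ∀ {K L : S.F} (h : S.le K L) (w : S.Pl L), d L w = ld h w * d K (S.over' h w))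
    (hdvd : ∀ {K L : S.F}, S.le K L → deg K ∣ deg L)
    (hdegformula : ∀ {K L : S.F} (h : S.le K L) (v : S.Pl K),
      ∑ᶠ (w : S.Pl L) (_ : S.over' h w = v), ld h w = deg L / deg K)
    {Q : S.F} (bot : ∀ K, S.le Q K)
    (hcomp : ∀ {K L : S.F} (h : S.le K L) (w : S.Pl L),
      S.over' (bot L) w = S.over' (bot K) (S.over' h w))
    (ε : S.Pl Q → ℝ) (c : ∀ K : S.F, S.Pl K → ℝ)
    (hc : ∀ K v, c K v = ε (S.over' (bot K) v) * d K v / deg K) :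
    S.Consistent c := by
  intro K L h v
  have hfib := S.finiteFibers h v
  have hfinsum : ∀ {M : Type} [AddCommMonoid M] (f : S.Pl L → M),
      ∑ᶠ (w : S.Pl L) (_ : S.over' h w = v), f w = ∑ w ∈ hfib.toFinset, f w :=
    fun f => finsum_mem_eq_finite_toFinset_sum f hfib
  have hK : (deg K : ℝ) ≠ 0 := by exact_mod_cast (hdegpos K).ne'
  have hL : (deg L : ℝ) ≠ 0 := by exact_mod_cast (hdegpos L).ne'
  have hsum_ld : ∑ w ∈ hfib.toFinset, (ld h w : ℝ) = deg L / deg K := by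
    rw [← Nat.cast_div (hdvd h) hK, ← hdegformula h v, hfinsum, Nat.cast_sum]
  have hc_fiber : ∀ w ∈ hfib.toFinset,
      c L w = ld h w * (ε (S.over' (bot K) v) * d K v / deg L) := by
    intro w hw
    rw [Set.Finite.mem_toFinset, Set.mem_ofPred_eq] at hw
    rw [hc L w, hcomp h w, htower h w, hw]
    push_cast
    ring
  rw [hfinsum, Finset.sum_congr rfl hc_fiber, ← Finset.sum_mul, hsum_ld, hc K v]
  field_simp

variable {S} in
theorem GloballyConsistent.exists_uncondSumE {c : ∀ K : S.F, S.Pl K → ℝ}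
    (hc : S.GloballyConsistent c) {Q : S.F} (bot : ∀ K, S.le Q K) (e : ℕ ≃ S.Pl Q) :
    ∃ L : EReal, UncondSumE (fun n => ((c Q (e n) : ℝ) : EReal)) L := by
  refine hc (fun n => some ⟨Q, e n⟩) (fun i j hij => ?_) ?_
  · exact S.Yset_disjoint Q (e i) (e j) (e.injective.ne hij)
  · exact (e.surjective.iUnion_comp (S.Yset Q)).trans (S.iUnion_Yset_eq_univ bot)

end PlaceSystem

lemma UncondSumE.tendsto_sum_range {x : ℕ → ℝ} {L : EReal}
    (hx : UncondSumE (fun n => (x n : EReal)) L) :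
    Tendsto (fun n => ((∑ k ∈ range n, x k : ℝ) : EReal)) atTop (nhds L) := by
  rcases hx with ⟨-, -, hL⟩ | ⟨⟨i, hi⟩, -⟩ | ⟨⟨i, hi⟩, -⟩
  · simpa using hL (Equiv.refl ℕ)
  · exact absurd hi (EReal.coe_ne_top _)
  · exact absurd hi (EReal.coe_ne_bot _)

lemma sum_range_neg_one_pow_succ (n : ℕ) :
    ∑ k ∈ range n, (-1 : ℝ) ^ (k + 1) = if Even n then 0 else -1 := by
  simp only [pow_succ, mul_neg_one, Finset.sum_neg_distrib, neg_one_geom_sum]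
  split_ifs <;> simp

lemma not_uncondSumE_neg_one_pow_succ (L : EReal) :
    ¬ UncondSumE (fun n => (((-1 : ℝ) ^ (n + 1) : ℝ) : EReal)) L := by
  intro hL
  have hsums := hL.tendsto_sum_range
  have heven : Tendsto (fun m : ℕ => 2 * m) atTop atTop := tendsto_id.const_mul_atTop' two_pos
  have hodd : Tendsto (fun m : ℕ => 2 * m + 1) atTop atTop := (tendsto_add_atTop_nat 1).comp heven
  have h0 : (0 : EReal) = L := by
    simpa [Function.comp_def, sum_range_neg_one_pow_succ] using hsums.comp heven
  have h1 : (-1 : EReal) = L := by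
    simpa [Function.comp_def, sum_range_neg_one_pow_succ, Nat.even_add_one] using hsums.comp hodd
  simpa using congrArg EReal.toReal (h0.trans h1.symm)

/-- Let `Q ∈ F` represent `ℚ` (so `deg Q = 1` and all its local degrees are `1`), let
`e : ℕ ≃ Pl Q` enumerate the rational places `p_1, p_2, …` (primes together with `∞`), and
define `c(K,v) = (-1)^n [K_v : ℚ_{p_n}]/[K : ℚ]` for `v` dividing the `n`-th rational place.
Then `c` is a consistent map, but `Σ_n c(ℚ, p_n) = Σ_n (-1)^n` converges unconditionally to
no value of `[-∞,∞]`; hence `c` is not globally consistent. -/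
theorem stmt_15 (S : PlaceSystem)
    (deg : S.F → ℕ) (hdegpos : ∀ K, 0 < deg K)
    (d : ∀ K : S.F, S.Pl K → ℕ)
    (ld : ∀ {K L : S.F}, S.le K L → S.Pl L → ℕ)
    (htower : ∀ {K L : S.F} (h : S.le K L) (w : S.Pl L),
      d L w = ld h w * d K (S.over' h w))
    (hdvd : ∀ {K L : S.F}, S.le K L → deg K ∣ deg L)
    (hdegformula : ∀ {K L : S.F} (h : S.le K L) (v : S.Pl K),
      ∑ᶠ (w : S.Pl L) (_ : S.over' h w = v), ld h w = deg L / deg K)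
    (Q : S.F) (bot : ∀ K, S.le Q K)
    (hcomp : ∀ {K L : S.F} (h : S.le K L) (w : S.Pl L),
      S.over' (bot L) w = S.over' (bot K) (S.over' h w))
    (hQdeg : deg Q = 1) (hQd : ∀ v : S.Pl Q, d Q v = 1)
    (e : ℕ ≃ S.Pl Q)
    (c : ∀ K : S.F, S.Pl K → ℝ)
    (hc : ∀ (K : S.F) (v : S.Pl K) (n : ℕ), S.over' (bot K) v = e n →
      c K v = (-1 : ℝ) ^ (n + 1) * (d K v : ℝ) / (deg K : ℝ)) :
    S.Consistent c ∧
    (∀ L : EReal, ¬ UncondSumE (fun n => ((c Q (e n) : ℝ) : EReal)) L) ∧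
    ¬ S.GloballyConsistent c := by
  have hc_sign : ∀ K v, c K v =
      (-1 : ℝ) ^ (e.symm (S.over' (bot K) v) + 1) * d K v / deg K :=
    fun K v => hc K v _ (e.apply_symm_apply _).symm
  have hcQ : ∀ n, c Q (e n) = (-1 : ℝ) ^ (n + 1) := fun n => by
    rw [hc Q (e n) n (S.over'_self (bot Q) (e n)), hQd, hQdeg]
    norm_num
  have hnot : ∀ L : EReal, ¬ UncondSumE (fun n => ((c Q (e n) : ℝ) : EReal)) L := by
    simpa only [hcQ] using not_uncondSumE_neg_one_pow_succ
  refine ⟨S.consistent_of_eq_mul_localDegree_div_degree deg hdegpos d ld htower hdvd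
    hdegformula bot hcomp (fun u => (-1 : ℝ) ^ (e.symm u + 1)) c hc_sign, hnot, fun hglob => ?_⟩
  obtain ⟨L, hL⟩ := hglob.exists_uncondSumE bot e
  exact hnot L hL
end
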